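/- arXiv:2003.04003 — 7 statements merged into one kernel-verified Lean document; each statement's English description precedes it below -/
import Mathlib

section
/- For every n ≥ 2, the holomorphic function f(w) = (1−w₁)^{−n/2} (principal branch) belongs to H²(B_n), but its restriction to the hyperplane slice {w ∈ B_n : w_n = 0} ≅ B_{n−1}, namely w' ↦ (1−w'₁)^{−n/2}, does not belong to H²(B_{n−1}). Hence restriction to a hyperplane does not map H²(B_n) into H²(B_{n−1}). -/
/-!
On the unit ball of `ℂᴺ`, the function `|1 - w₁|⁻ᵏ` is integrable for `k = N` but not for
`k = N + 1`: the part of the ball where `|1 - w₁| ≈ t` is a box of size `t` in `w₁` and `√t` in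
each of the other `N - 1` coordinates, so its volume is `≈ t ^ (N + 1)`. Summing over the dyadic
shells `|1 - w₁| ∈ (2⁻ʲ⁻¹, 2⁻ʲ]` gives a geometric series for `k = N` and a divergent series of
constant terms for `k = N + 1`. Since `|(1 - w₁) ^ (-n/2)|² = |1 - w₁|⁻ⁿ`, the function is square
integrable on `B_n` (`N = n`, `k = n`) but not on `B_{n-1}` (`N = n - 1`, `k = n`).
-/

open MeasureTheory Metric

/-- Lebesgue measure on `ℂⁿ ≅ ℝ^{2n}`, realized through the real inner product structure of
`EuclideanSpace ℂ (Fin n)`. -/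
noncomputable instance (n : ℕ) : MeasurableSpace (EuclideanSpace ℂ (Fin n)) :=
  MeasurableSpace.comap WithLp.ofLp MeasurableSpace.pi

instance (n : ℕ) : BorelSpace (EuclideanSpace ℂ (Fin n)) := PiLp.borelSpace 2

open Set Function
open scoped ENNReal

def dyadicShell {α : Type*} (s : Set α) (ρ : α → ℝ) (j : ℕ) : Set α :=
  s ∩ ρ ⁻¹' Ioc (2⁻¹ ^ (j + 1)) (2⁻¹ ^ j)

section DyadicShell

variable {α : Type*} {s : Set α} {ρ : α → ℝ}

lemma pairwise_disjoint_dyadicShell : Pairwise (Disjoint on dyadicShell s ρ) := by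
  intro i j hij
  have hanti : Antitone fun j : ℕ => (2 : ℝ)⁻¹ ^ j :=
    fun _ _ h => pow_le_pow_of_le_one (by norm_num) (by norm_num) h
  exact ((hanti.pairwise_disjoint_on_Ioc_succ hij).preimage ρ).mono inter_subset_right
    inter_subset_right

lemma inter_preimage_Ioc_subset_iUnion_dyadicShell :
    s ∩ ρ ⁻¹' Ioc 0 1 ⊆ ⋃ j, dyadicShell s ρ j := by
  rintro x ⟨hx, hpos, hle⟩
  obtain ⟨j, hj, hj'⟩ := exists_nat_pow_near ((one_le_inv₀ hpos).2 hle) one_lt_two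
  refine mem_iUnion.2 ⟨j, hx, ?_, ?_⟩
  · rw [inv_pow]
    exact inv_lt_of_inv_lt₀ hpos hj'
  · rw [inv_pow]
    exact le_inv_of_le_inv₀ (by positivity) hj

lemma ofReal_inv_two_pow (j : ℕ) : ENNReal.ofReal (2⁻¹ ^ j) = 2⁻¹ ^ j := by
  rw [ENNReal.ofReal_pow (by norm_num), ENNReal.ofReal_inv_of_pos two_pos, ENNReal.ofReal_ofNat]

lemma ofReal_mem_Ioc_of_mem_dyadicShell {x : α} {j : ℕ} (hx : x ∈ dyadicShell s ρ j) :
    ENNReal.ofReal (ρ x) ∈ Ioc (2⁻¹ ^ (j + 1)) (2⁻¹ ^ j) := by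
  rw [← ofReal_inv_two_pow, ← ofReal_inv_two_pow]
  exact ⟨(ENNReal.ofReal_lt_ofReal_iff_of_nonneg (by positivity)).2 hx.2.1,
    ENNReal.ofReal_le_ofReal hx.2.2⟩

lemma ENNReal.inv_pow_mul_pow_cancel {a : ℝ≥0∞} (h₀ : a ≠ 0) (h : a ≠ ∞) (k : ℕ) :
    a⁻¹ ^ k * a ^ k = 1 := by
  rw [← mul_pow, ENNReal.inv_mul_cancel h₀ h, one_pow]

variable [MeasurableSpace α] {μ : Measure α} {k : ℕ}

theorem setLIntegral_inv_pow_lt_top (hμs : μ s ≠ ∞) (hρ : ∀ x ∈ s, 0 < ρ x) {C : ℝ≥0∞}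
    (hC : C ≠ ∞)
    (hμ : ∀ t ∈ Ioc (0 : ℝ) 1, μ (s ∩ ρ ⁻¹' Iic t) ≤ C * ENNReal.ofReal t ^ (k + 1)) :
    ∫⁻ x in s, (ENNReal.ofReal (ρ x))⁻¹ ^ k ∂μ < ∞ := by
  have hcover : s ⊆ (⋃ j, dyadicShell s ρ j) ∪ (s ∩ ρ ⁻¹' Ioi 1) := fun x hx =>
    (le_or_gt (ρ x) 1).imp
      (fun h => inter_preimage_Ioc_subset_iUnion_dyadicShell ⟨hx, hρ x hx, h⟩) fun h => ⟨hx, h⟩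
  have hshell (j : ℕ) :
      ∫⁻ x in dyadicShell s ρ j, (ENNReal.ofReal (ρ x))⁻¹ ^ k ∂μ ≤ C * 2 ^ k * 2⁻¹ ^ j := by
    have ha₀ : (2⁻¹ ^ j : ℝ≥0∞) ≠ 0 := by simp
    have ha : (2⁻¹ ^ j : ℝ≥0∞) ≠ ∞ := by simp
    calc ∫⁻ x in dyadicShell s ρ j, (ENNReal.ofReal (ρ x))⁻¹ ^ k ∂μ
        ≤ ∫⁻ _ in dyadicShell s ρ j, (2⁻¹ ^ (j + 1))⁻¹ ^ k ∂μ :=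
          setLIntegral_mono measurable_const fun x hx => by
            gcongr; exact (ofReal_mem_Ioc_of_mem_dyadicShell hx).1.le
      _ = (2⁻¹ ^ (j + 1))⁻¹ ^ k * μ (dyadicShell s ρ j) := setLIntegral_const _ _
      _ ≤ (2⁻¹ ^ (j + 1))⁻¹ ^ k * (C * (2⁻¹ ^ j) ^ (k + 1)) := by
          gcongr
          calc μ (dyadicShell s ρ j) ≤ μ (s ∩ ρ ⁻¹' Iic (2⁻¹ ^ j)) :=
                measure_mono fun x hx => ⟨hx.1, hx.2.2⟩
            _ ≤ C * ENNReal.ofReal (2⁻¹ ^ j) ^ (k + 1) :=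
                hμ _ ⟨by positivity, pow_le_one₀ (by norm_num) (by norm_num)⟩
            _ = C * (2⁻¹ ^ j) ^ (k + 1) := by rw [ofReal_inv_two_pow]
      _ = C * 2 ^ k * 2⁻¹ ^ j := by
          rw [pow_succ, ENNReal.mul_inv (Or.inl ha₀) (Or.inl ha), inv_inv,
            ← one_mul (C * 2 ^ k * 2⁻¹ ^ j), ← ENNReal.inv_pow_mul_pow_cancel ha₀ ha k]
          ring
  calc ∫⁻ x in s, (ENNReal.ofReal (ρ x))⁻¹ ^ k ∂μ
      ≤ ∫⁻ x in (⋃ j, dyadicShell s ρ j) ∪ (s ∩ ρ ⁻¹' Ioi 1), (ENNReal.ofReal (ρ x))⁻¹ ^ k ∂μ :=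
        lintegral_mono_set hcover
    _ ≤ ∑' j, ∫⁻ x in dyadicShell s ρ j, (ENNReal.ofReal (ρ x))⁻¹ ^ k ∂μ +
          ∫⁻ _ in s, 1 ∂μ := by
        refine (lintegral_union_le _ _ _).trans (add_le_add (lintegral_iUnion_le _ _) ?_)
        refine (setLIntegral_mono measurable_const fun x hx => ?_).trans
          (lintegral_mono_set inter_subset_left)
        exact pow_le_one₀ zero_le (ENNReal.inv_le_one.2 (ENNReal.one_le_ofReal.2 hx.2.le))
    _ ≤ ∑' j : ℕ, C * 2 ^ k * 2⁻¹ ^ j + μ s := by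
        rw [setLIntegral_one]
        gcongr with j
        exact hshell j
    _ < ∞ := by
        rw [ENNReal.tsum_mul_left, ENNReal.tsum_geometric, ENNReal.one_sub_inv_two, inv_inv]
        finiteness

theorem setLIntegral_inv_pow_eq_top (hs : MeasurableSet s) (hρ : Measurable ρ) {c : ℝ≥0∞}
    (hc : c ≠ 0)
    (hμ : ∀ t ∈ Ioc (0 : ℝ) 1, c * ENNReal.ofReal t ^ k ≤ μ (s ∩ ρ ⁻¹' Ioc (t / 2) t)) :
    ∫⁻ x in s, (ENNReal.ofReal (ρ x))⁻¹ ^ k ∂μ = ∞ := by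
  have hshell (j : ℕ) : c ≤ ∫⁻ x in dyadicShell s ρ j, (ENNReal.ofReal (ρ x))⁻¹ ^ k ∂μ := by
    have ha₀ : (2⁻¹ ^ j : ℝ≥0∞) ≠ 0 := by simp
    have ha : (2⁻¹ ^ j : ℝ≥0∞) ≠ ∞ := by simp
    calc c = (2⁻¹ ^ j)⁻¹ ^ k * (c * (2⁻¹ ^ j) ^ k) := by
          rw [mul_left_comm, ENNReal.inv_pow_mul_pow_cancel ha₀ ha, mul_one]
      _ ≤ (2⁻¹ ^ j)⁻¹ ^ k * μ (dyadicShell s ρ j) := by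
          gcongr
          have := hμ (2⁻¹ ^ j) ⟨by positivity, pow_le_one₀ (by norm_num) (by norm_num)⟩
          rwa [ofReal_inv_two_pow, div_eq_mul_inv, ← pow_succ] at this
      _ = ∫⁻ _ in dyadicShell s ρ j, (2⁻¹ ^ j)⁻¹ ^ k ∂μ := (setLIntegral_const _ _).symm
      _ ≤ ∫⁻ x in dyadicShell s ρ j, (ENNReal.ofReal (ρ x))⁻¹ ^ k ∂μ :=
          setLIntegral_mono (by fun_prop) fun x hx => by
            gcongr; exact (ofReal_mem_Ioc_of_mem_dyadicShell hx).2
  refine top_unique ?_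
  calc ∞ = ∑' _ : ℕ, c := (ENNReal.tsum_const_eq_top_of_ne_zero hc).symm
    _ ≤ ∑' j, ∫⁻ x in dyadicShell s ρ j, (ENNReal.ofReal (ρ x))⁻¹ ^ k ∂μ :=
        ENNReal.tsum_le_tsum hshell
    _ = ∫⁻ x in ⋃ j, dyadicShell s ρ j, (ENNReal.ofReal (ρ x))⁻¹ ^ k ∂μ :=
        (lintegral_iUnion (fun _ => hs.inter (hρ measurableSet_Ioc))
          pairwise_disjoint_dyadicShell _).symm
    _ ≤ ∫⁻ x in s, (ENNReal.ofReal (ρ x))⁻¹ ^ k ∂μ :=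
        lintegral_mono_set (iUnion_subset fun _ => inter_subset_left)

end DyadicShell

noncomputable def reImOrthonormalBasis (N : ℕ) :
    OrthonormalBasis (Fin N × Fin 2) ℝ (EuclideanSpace ℂ (Fin N)) :=
  ⟨(LinearIsometryEquiv.piLpCongrRight 2 fun _ => Complex.orthonormalBasisOneI.repr).trans
    ((LinearIsometryEquiv.piLpCurry ℝ 2 fun _ _ => ℝ).symm.trans
      (LinearIsometryEquiv.piLpCongrLeft 2 ℝ ℝ (Equiv.sigmaEquivProd (Fin N) (Fin 2))))⟩

lemma reImOrthonormalBasis_repr_apply {N : ℕ} (x : EuclideanSpace ℂ (Fin N)) (i : Fin N)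
    (k : Fin 2) :
    (reImOrthonormalBasis N).repr x (i, k) = Complex.orthonormalBasisOneI.repr (x i) k := by
  simp [reImOrthonormalBasis, Sigma.uncurry]

lemma preimage_toLp_parallelepiped_reImOrthonormalBasis (N : ℕ) :
    WithLp.toLp 2 ⁻¹' parallelepiped (reImOrthonormalBasis N) =
      univ.pi fun _ => parallelepiped Complex.orthonormalBasisOneI := by
  ext x
  simp only [← OrthonormalBasis.coe_toBasis, parallelepiped_basis_eq, mem_preimage, mem_pi,
    mem_univ, true_implies, mem_ofPred_eq, Prod.forall, OrthonormalBasis.coe_toBasis_repr_apply,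
    reImOrthonormalBasis_repr_apply]

theorem volume_preserving_ofLp_complex (N : ℕ) :
    MeasurePreserving (MeasurableEquiv.toLp 2 (Fin N → ℂ)).symm := by
  suffices volume = Measure.map (MeasurableEquiv.toLp 2 (Fin N → ℂ)) volume by
    convert ((MeasurableEquiv.toLp 2 (Fin N → ℂ)).measurable.measurePreserving _).symm
    -- the `MeasurableSpace` instance above unfolds to `WithLp.measurableSpace`
    rfl
  have : (Measure.map (MeasurableEquiv.toLp 2 (Fin N → ℂ)) volume).IsAddHaarMeasure :=
    (PiLp.continuousLinearEquiv 2 ℝ fun _ : Fin N => ℂ).symm.isAddHaarMeasure_map _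
  -- `volume` is the Haar measure giving the parallelepiped of any orthonormal basis measure `1`
  rw [← (reImOrthonormalBasis N).addHaar_eq_volume, Module.Basis.addHaar_eq_iff,
    Module.Basis.coe_parallelepiped, OrthonormalBasis.coe_toBasis, MeasurableEquiv.map_apply,
    MeasurableEquiv.coe_toLp, preimage_toLp_parallelepiped_reImOrthonormalBasis, volume_pi_pi,
    Finset.prod_const, OrthonormalBasis.volume_parallelepiped, one_pow]

lemma ofReal_norm_cpow_neg_half_sq {z : ℂ} (hz : z ≠ 0) (n : ℕ) :
    ENNReal.ofReal (‖z ^ (-(n : ℂ) / 2)‖ ^ 2) = (ENNReal.ofReal ‖z‖)⁻¹ ^ n := by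
  have hexp : -(n : ℂ) / 2 = ((-(n : ℝ) / 2 : ℝ) : ℂ) := by push_cast; ring
  rw [hexp, Complex.norm_cpow_real, ← Real.rpow_natCast _ 2, ← Real.rpow_mul (norm_nonneg _),
    show -(n : ℝ) / 2 * (2 : ℕ) = -(n : ℕ) by push_cast; ring, Real.rpow_neg (norm_nonneg _),
    Real.rpow_natCast, ENNReal.ofReal_inv_of_pos (by positivity),
    ENNReal.ofReal_pow (norm_nonneg _), ENNReal.inv_pow]

section Ball

variable {N : ℕ}

lemma volume_preimage_ofLp_pi_update (i₀ : Fin N) (A B : Set ℂ) :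
    volume (WithLp.ofLp ⁻¹' univ.pi (update (fun _ => B) i₀ A) :
      Set (EuclideanSpace ℂ (Fin N))) = volume A * volume B ^ (N - 1) := by
  rw [← MeasurableEquiv.coe_toLp_symm, (volume_preserving_ofLp_complex N).measure_preimage_equiv,
    volume_pi_pi, Fintype.prod_eq_mul_prod_compl i₀, update_self,
    Finset.prod_congr rfl fun i hi => by
      rw [update_of_ne (Finset.mem_compl.1 hi ∘ Finset.mem_singleton.2)],
    Finset.prod_const, Finset.card_compl, Finset.card_singleton, Fintype.card_fin]

lemma norm_apply_lt_one {w : EuclideanSpace ℂ (Fin N)} (hw : w ∈ ball 0 1) (i : Fin N) :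
    ‖w i‖ < 1 :=
  (PiLp.norm_apply_le w i).trans_lt (mem_ball_zero_iff.1 hw)

lemma one_sub_apply_ne_zero {w : EuclideanSpace ℂ (Fin N)} (hw : w ∈ ball 0 1) (i : Fin N) :
    1 - w i ≠ 0 :=
  sub_ne_zero.2 fun h => by simpa [← h] using norm_apply_lt_one hw i

lemma differentiableOn_one_sub_apply_cpow (i₀ : Fin N) (a : ℂ) :
    DifferentiableOn ℂ (fun w : EuclideanSpace ℂ (Fin N) => (1 - w i₀) ^ a) (ball 0 1) := by
  intro w hw
  refine DifferentiableAt.differentiableWithinAt ?_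
  refine ((differentiableAt_const _).sub (EuclideanSpace.proj i₀).differentiableAt).cpow
    (differentiableAt_const _) ?_
  simpa [sub_eq_add_neg] using
    Complex.mem_slitPlane_of_norm_lt_one (z := -w i₀) (by simpa using norm_apply_lt_one hw i₀)

lemma integrableOn_norm_one_sub_apply_cpow_sq_iff (i₀ : Fin N) (n : ℕ) :
    IntegrableOn (fun w : EuclideanSpace ℂ (Fin N) => ‖(1 - w i₀) ^ (-(n : ℂ) / 2)‖ ^ 2)
        (ball 0 1) ↔
      ∫⁻ w in ball (0 : EuclideanSpace ℂ (Fin N)) 1, (ENNReal.ofReal ‖1 - w i₀‖)⁻¹ ^ n < ∞ := by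
  have hmeas : AEStronglyMeasurable (fun w : EuclideanSpace ℂ (Fin N) =>
      ‖(1 - w i₀) ^ (-(n : ℂ) / 2)‖ ^ 2) (volume.restrict (ball 0 1)) :=
    ((differentiableOn_one_sub_apply_cpow i₀ _).continuousOn.norm.pow 2).aestronglyMeasurable
      measurableSet_ball
  rw [IntegrableOn, Integrable, and_iff_right hmeas,
    hasFiniteIntegral_iff_ofReal (ae_of_all _ fun _ => by positivity)]
  exact iff_of_eq (congrArg (· < ∞) (setLIntegral_congr_fun measurableSet_ball fun w hw =>
    ofReal_norm_cpow_neg_half_sq (one_sub_apply_ne_zero hw i₀) n))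

lemma ball_inter_subset_pi (i₀ : Fin N) (t : ℝ) :
    ball (0 : EuclideanSpace ℂ (Fin N)) 1 ∩ (fun w => ‖1 - w i₀‖) ⁻¹' Iic t ⊆
      WithLp.ofLp ⁻¹' univ.pi (update (fun _ => closedBall 0 √(2 * t)) i₀ (closedBall 1 t)) := by
  rintro w ⟨hw, ht : ‖1 - w i₀‖ ≤ t⟩ i -
  rcases eq_or_ne i i₀ with rfl | hi
  · simpa [dist_eq_norm, norm_sub_rev] using ht
  · rw [update_of_ne hi, mem_closedBall_zero_iff]
    refine Real.le_sqrt_of_sq_le ?_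
    have hsum : ‖w i‖ ^ 2 + ‖w i₀‖ ^ 2 < 1 := by
      calc ‖w i‖ ^ 2 + ‖w i₀‖ ^ 2 ≤ ‖w‖ ^ 2 := by
            rw [EuclideanSpace.norm_sq_eq]
            exact Finset.add_le_sum (f := fun j => ‖w j‖ ^ 2) (fun _ _ => by positivity)
              (Finset.mem_univ _) (Finset.mem_univ _) hi
        _ < 1 := by
            rw [sq_lt_one_iff₀ (norm_nonneg _)]
            exact mem_ball_zero_iff.1 hw
    have hdist : 1 - ‖w i₀‖ ≤ ‖1 - w i₀‖ := by simpa using norm_sub_norm_le (1 : ℂ) (w i₀)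
    nlinarith [norm_apply_lt_one hw i₀, norm_nonneg (w i₀)]

lemma pi_subset_ball_inter (i₀ : Fin N) {t : ℝ} (ht₀ : 0 < t) (ht₁ : t ≤ 1) :
    WithLp.ofLp ⁻¹' univ.pi (update (fun _ => ball 0 √(t / (2 * N))) i₀
        (ball ((1 - 3 * t / 4 : ℝ) : ℂ) (t / 8))) ⊆
      ball (0 : EuclideanSpace ℂ (Fin N)) 1 ∩ (fun w => ‖1 - w i₀‖) ⁻¹' Ioc (t / 2) t := by
  intro w hw
  have hcenter : ‖w i₀ - ((1 - 3 * t / 4 : ℝ) : ℂ)‖ < t / 8 := by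
    simpa [dist_eq_norm] using hw i₀ (mem_univ _)
  have hrest : ∑ i ∈ {i₀}ᶜ, ‖w i‖ ^ 2 ≤ t / 2 := by
    calc ∑ i ∈ {i₀}ᶜ, ‖w i‖ ^ 2 ≤ ∑ _i ∈ {i₀}ᶜ, t / (2 * N) := by
          refine Finset.sum_le_sum fun i hi => ?_
          have := hw i (mem_univ _)
          rw [update_of_ne (by simpa using hi), mem_ball_zero_iff,
            Real.lt_sqrt (norm_nonneg _)] at this
          exact this.le
      _ ≤ ∑ _i : Fin N, t / (2 * N) :=
          Finset.sum_le_sum_of_subset_of_nonneg (Finset.subset_univ _)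
            fun _ _ _ => by positivity
      _ = t / 2 := by
          have : (N : ℝ) ≠ 0 := Nat.cast_ne_zero.2 i₀.pos.ne'
          simp only [Finset.sum_const, Finset.card_univ, Fintype.card_fin, nsmul_eq_mul]
          field_simp
  have hρ : |‖1 - w i₀‖ - 3 * t / 4| < t / 8 := by
    have := abs_norm_sub_norm_le (1 - w i₀) ((3 * t / 4 : ℝ) : ℂ)
    rw [Complex.norm_real, Real.norm_of_nonneg (by positivity)] at this
    refine this.trans_lt (lt_of_eq_of_lt ?_ hcenter)
    rw [← norm_neg]; congr 1; push_cast; ring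
  have hw₀ : ‖w i₀‖ < 1 - 5 * t / 8 := by
    have := norm_le_norm_add_norm_sub' (w i₀) ((1 - 3 * t / 4 : ℝ) : ℂ)
    rw [Complex.norm_real, Real.norm_of_nonneg (by linarith)] at this
    linarith
  refine ⟨mem_ball_zero_iff.2 ((sq_lt_one_iff₀ (norm_nonneg _)).1 ?_), ?_⟩
  · rw [EuclideanSpace.norm_sq_eq, Fintype.sum_eq_add_sum_compl i₀]
    nlinarith [norm_nonneg (w i₀)]
  · rw [abs_lt] at hρ
    constructor <;> linarith

lemma measurable_norm_one_sub_apply (i₀ : Fin N) :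
    Measurable fun w : EuclideanSpace ℂ (Fin N) => ‖1 - w i₀‖ :=
  (continuous_const.sub (EuclideanSpace.proj i₀).continuous).norm.measurable

theorem setLIntegral_inv_norm_one_sub_apply_pow_lt_top (i₀ : Fin N) :
    ∫⁻ w in ball (0 : EuclideanSpace ℂ (Fin N)) 1, (ENNReal.ofReal ‖1 - w i₀‖)⁻¹ ^ N < ∞ := by
  obtain ⟨m, rfl⟩ := Nat.exists_eq_add_one.2 i₀.pos
  refine setLIntegral_inv_pow_lt_top measure_ball_lt_top.ne
    (fun w hw => norm_pos_iff.2 (one_sub_apply_ne_zero hw i₀))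
    (C := NNReal.pi * (2 * NNReal.pi) ^ m) (by finiteness) fun t ht => ?_
  calc volume (ball 0 1 ∩ (fun w : EuclideanSpace ℂ (Fin (m + 1)) => ‖1 - w i₀‖) ⁻¹' Iic t)
      ≤ volume (WithLp.ofLp ⁻¹' univ.pi (update (fun _ => closedBall 0 √(2 * t)) i₀
          (closedBall 1 t)) : Set (EuclideanSpace ℂ (Fin (m + 1)))) :=
        measure_mono (ball_inter_subset_pi i₀ t)
    _ = NNReal.pi * (2 * NNReal.pi) ^ m * ENNReal.ofReal t ^ (m + 1 + 1) := by
        rw [volume_preimage_ofLp_pi_update, Complex.volume_closedBall, Complex.volume_closedBall,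
          ← ENNReal.ofReal_pow (Real.sqrt_nonneg _), Real.sq_sqrt (by linarith [ht.1]),
          ENNReal.ofReal_mul zero_le_two, ENNReal.ofReal_ofNat, Nat.add_sub_cancel]
        ring

theorem setLIntegral_inv_norm_one_sub_apply_pow_eq_top (i₀ : Fin N) :
    ∫⁻ w in ball (0 : EuclideanSpace ℂ (Fin N)) 1, (ENNReal.ofReal ‖1 - w i₀‖)⁻¹ ^ (N + 1) = ∞ := by
  obtain ⟨m, rfl⟩ := Nat.exists_eq_add_one.2 i₀.pos
  have hπ : (NNReal.pi : ℝ≥0∞) ≠ 0 := by simp [NNReal.pi_ne_zero]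
  have h₈ : ENNReal.ofReal 8⁻¹ ≠ 0 := by simp
  have hN : ENNReal.ofReal (2 * (m + 1 : ℕ))⁻¹ ≠ 0 := (ENNReal.ofReal_pos.2 (by positivity)).ne'
  refine setLIntegral_inv_pow_eq_top measurableSet_ball (measurable_norm_one_sub_apply i₀)
    (c := ENNReal.ofReal 8⁻¹ ^ 2 * NNReal.pi * (ENNReal.ofReal (2 * (m + 1 : ℕ))⁻¹ * NNReal.pi) ^ m)
    (mul_ne_zero (mul_ne_zero (pow_ne_zero _ h₈) hπ) (pow_ne_zero _ (mul_ne_zero hN hπ)))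
    fun t ht => ?_
  calc _ = volume (WithLp.ofLp ⁻¹' univ.pi (update (fun _ => ball 0 √(t / (2 * (m + 1 : ℕ)))) i₀
          (ball ((1 - 3 * t / 4 : ℝ) : ℂ) (t / 8))) : Set (EuclideanSpace ℂ (Fin (m + 1)))) := by
        rw [volume_preimage_ofLp_pi_update, Complex.volume_ball, Complex.volume_ball,
          ← ENNReal.ofReal_pow (Real.sqrt_nonneg _), Real.sq_sqrt (div_pos ht.1 (by positivity)).le,
          div_eq_mul_inv, div_eq_mul_inv, ENNReal.ofReal_mul ht.1.le, ENNReal.ofReal_mul ht.1.le,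
          Nat.add_sub_cancel]
        ring
    _ ≤ _ := measure_mono (pi_subset_ball_inter i₀ ht.1 ht.2)

end Ball

/-- For every `n ≥ 2`, the holomorphic function `f(w) = (1 - w₁)^{-n/2}`
(principal branch) belongs to `H²(B_n)`, but its restriction to the hyperplane slice
`{w_n = 0} ≅ B_{n-1}`, namely `w' ↦ (1 - w'₁)^{-n/2}`, does not belong to `H²(B_{n-1})`.
Hence restriction to a hyperplane does not map `H²(B_n)` into `H²(B_{n-1})`. -/
theorem restriction_not_into_H2 (n : ℕ) (hn : 2 ≤ n) :
    (DifferentiableOn ℂ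
        (fun w : EuclideanSpace ℂ (Fin n) =>
          ((1 : ℂ) - w ⟨0, by omega⟩) ^ (-(n : ℂ) / 2))
        (ball (0 : EuclideanSpace ℂ (Fin n)) 1) ∧
      IntegrableOn
        (fun w : EuclideanSpace ℂ (Fin n) =>
          ‖((1 : ℂ) - w ⟨0, by omega⟩) ^ (-(n : ℂ) / 2)‖ ^ 2)
        (ball (0 : EuclideanSpace ℂ (Fin n)) 1) volume) ∧
    ¬ IntegrableOn
        (fun w : EuclideanSpace ℂ (Fin (n - 1)) =>
          ‖((1 : ℂ) - w ⟨0, by omega⟩) ^ (-(n : ℂ) / 2)‖ ^ 2)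
        (ball (0 : EuclideanSpace ℂ (Fin (n - 1))) 1) volume := by
  refine ⟨⟨differentiableOn_one_sub_apply_cpow _ _,
    (integrableOn_norm_one_sub_apply_cpow_sq_iff _ n).2
      (setLIntegral_inv_norm_one_sub_apply_pow_lt_top _)⟩, ?_⟩
  have hslice := setLIntegral_inv_norm_one_sub_apply_pow_eq_top (⟨0, by omega⟩ : Fin (n - 1))
  rw [Nat.sub_add_cancel (by omega : 1 ≤ n)] at hslice
  rw [integrableOn_norm_one_sub_apply_cpow_sq_iff, hslice]
  exact lt_irrefl ∞
end

section
/- Let n ≥ 1, let ξ : ℕ^n → ℂ be a family of complex numbers and v ∈ ℂ^n. Then Σ_{α∈ℕ^n} |Σ_{j : α_j ≥ 1} √(α_j) · ξ_{α−c_j} · v_j|² ≤ (Σ_{ℓ=1}^n |v_ℓ|²) · Σ_{α∈ℕ^n} (|α|+n) |ξ_α|², where c_j is the j-th standard basis multi-index (both sides possibly infinite). -/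
/-!
For each `α`, Cauchy–Schwarz over `j` bounds the inner sum by
`(Σ_ℓ |v_ℓ|²) · Σ_j α_j |ξ_{α-c_j}|²`. Summing over `α` and substituting `α = β + c_j` in the
`j`-th term (the terms with `α_j = 0` vanish) turns the weight `Σ_j α_j` into
`Σ_j (β_j + 1) = |β| + n`.
-/

open Finset ENNReal

theorem enorm_sum_mul_sq_le {ι R : Type*} [SeminormedRing R] (s : Finset ι) (f g : ι → R) :
    ‖∑ i ∈ s, f i * g i‖ₑ ^ 2 ≤ (∑ i ∈ s, ‖f i‖ₑ ^ 2) * ∑ i ∈ s, ‖g i‖ₑ ^ 2 := by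
  have h : ‖∑ i ∈ s, f i * g i‖₊ ^ 2 ≤ (∑ i ∈ s, ‖f i‖₊ ^ 2) * ∑ i ∈ s, ‖g i‖₊ ^ 2 :=
    calc ‖∑ i ∈ s, f i * g i‖₊ ^ 2
        ≤ (∑ i ∈ s, ‖f i‖₊ * ‖g i‖₊) ^ 2 := by
          gcongr
          exact (nnnorm_sum_le _ _).trans (sum_le_sum fun i _ ↦ nnnorm_mul_le _ _)
      _ ≤ _ := sum_mul_sq_le_sq_mul_sq _ _ _
  simp only [enorm_eq_nnnorm]
  exact_mod_cast h

theorem enorm_sum_sqrt_mul_mul_sq_le {ι : Type*} [Fintype ι] (s : Finset ι) (a : ι → ℕ)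
    (F v : ι → ℂ) :
    ‖∑ j ∈ s, (Real.sqrt (a j) : ℂ) * F j * v j‖ₑ ^ 2 ≤
      (∑ j, ‖v j‖ₑ ^ 2) * ∑ j, (a j : ℝ≥0∞) * ‖F j‖ₑ ^ 2 := by
  have hweight (j : ι) : ‖(Real.sqrt (a j) : ℂ) * F j‖ₑ ^ 2 = (a j : ℝ≥0∞) * ‖F j‖ₑ ^ 2 := by
    rw [enorm_mul, mul_pow, ← enorm_pow, ← Complex.ofReal_pow, Real.sq_sqrt (Nat.cast_nonneg _),
      Complex.ofReal_natCast, ← ofReal_norm, Complex.norm_natCast, ENNReal.ofReal_natCast]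
  calc ‖∑ j ∈ s, (Real.sqrt (a j) : ℂ) * F j * v j‖ₑ ^ 2
      ≤ (∑ j ∈ s, ‖(Real.sqrt (a j) : ℂ) * F j‖ₑ ^ 2) * ∑ j ∈ s, ‖v j‖ₑ ^ 2 :=
        enorm_sum_mul_sq_le _ _ _
    _ ≤ (∑ j, (a j : ℝ≥0∞) * ‖F j‖ₑ ^ 2) * ∑ j, ‖v j‖ₑ ^ 2 := by
        simp only [hweight]
        gcongr <;> exact subset_univ s
    _ = _ := mul_comm _ _

theorem tsum_apply_mul_comp_sub_basis {ι : Type*} [DecidableEq ι] (j : ι)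
    (g : (ι → ℕ) → ℝ≥0∞) :
    ∑' α : ι → ℕ, (α j : ℝ≥0∞) * g (fun i ↦ α i - if i = j then 1 else 0) =
      ∑' β : ι → ℕ, ((β j : ℝ≥0∞) + 1) * g β := by
  set raise : (ι → ℕ) → (ι → ℕ) := fun β i ↦ β i + if i = j then 1 else 0
  have hinj : Function.Injective raise := fun β β' h ↦ funext fun i ↦ by
    simpa [raise] using congrFun h i
  have hsupp : Function.support
      (fun α : ι → ℕ ↦ (α j : ℝ≥0∞) * g (fun i ↦ α i - if i = j then 1 else 0)) ⊆
        Set.range raise := by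
    intro α hα
    have hj : α j ≠ 0 := by rintro h; simp [h] at hα
    refine ⟨fun i ↦ α i - if i = j then 1 else 0, funext fun i ↦ ?_⟩
    by_cases hij : i = j
    · simp only [raise, hij, if_true]; omega
    · simp [raise, hij]
  rw [← hinj.tsum_eq hsupp]
  refine tsum_congr fun β ↦ ?_
  simp [raise]

theorem curvature_cauchy_schwarz_general (n : ℕ) (ξ : (Fin n → ℕ) → ℂ) (v : Fin n → ℂ) :
    (∑' α : Fin n → ℕ,
        (‖∑ j ∈ Finset.univ.filter (fun j : Fin n => 1 ≤ α j),
            (Real.sqrt (α j) : ℂ) * ξ (fun i => α i - if i = j then 1 else 0) * v j‖₊ :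
          ℝ≥0∞) ^ 2) ≤
      (∑ ℓ : Fin n, (‖v ℓ‖₊ : ℝ≥0∞) ^ 2) *
        ∑' α : Fin n → ℕ, (((∑ j, α j) + n : ℕ) : ℝ≥0∞) * (‖ξ α‖₊ : ℝ≥0∞) ^ 2 := by
  simp only [← enorm_eq_nnnorm]
  calc _ ≤ ∑' α : Fin n → ℕ, (∑ ℓ, ‖v ℓ‖ₑ ^ 2) *
          ∑ j, (α j : ℝ≥0∞) * ‖ξ (fun i ↦ α i - if i = j then 1 else 0)‖ₑ ^ 2 :=
        ENNReal.tsum_le_tsum fun α ↦ enorm_sum_sqrt_mul_mul_sq_le _ _ _ _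
    _ = (∑ ℓ, ‖v ℓ‖ₑ ^ 2) * ∑ j, ∑' β : Fin n → ℕ, ((β j : ℝ≥0∞) + 1) * ‖ξ β‖ₑ ^ 2 := by
        rw [ENNReal.tsum_mul_left, Summable.tsum_finsetSum fun _ _ ↦ ENNReal.summable]
        simp only [tsum_apply_mul_comp_sub_basis _ fun β ↦ ‖ξ β‖ₑ ^ 2]
    _ = _ := by
        rw [← Summable.tsum_finsetSum fun _ _ ↦ ENNReal.summable]
        congr 1
        refine tsum_congr fun β ↦ ?_
        rw [← sum_mul]
        push_cast
        simp [sum_add_distrib]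

/-- **Cauchy–Schwarz estimate for the model curvature form.**
Let `n ≥ 1`, `ξ : ℕⁿ → ℂ` and `v ∈ ℂⁿ`. Then
`Σ_α |Σ_{j : α_j ≥ 1} √(α_j) ξ_{α-c_j} v_j|² ≤ (Σ_ℓ |v_ℓ|²) · Σ_α (|α|+n)|ξ_α|²`,
both sides being possibly infinite. -/
theorem curvature_cauchy_schwarz (n : ℕ) (hn : 1 ≤ n) (ξ : (Fin n → ℕ) → ℂ) (v : Fin n → ℂ) :
    (∑' α : Fin n → ℕ,
        (‖∑ j ∈ Finset.univ.filter (fun j : Fin n => 1 ≤ α j),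
            (Real.sqrt (α j) : ℂ) * ξ (fun i => α i - if i = j then 1 else 0) * v j‖₊ :
          ℝ≥0∞) ^ 2) ≤
      (∑ ℓ : Fin n, (‖v ℓ‖₊ : ℝ≥0∞) ^ 2) *
        ∑' α : Fin n → ℕ, (((∑ j, α j) + n : ℕ) : ℝ≥0∞) * (‖ξ α‖₊ : ℝ≥0∞) ^ 2 :=
  curvature_cauchy_schwarz_general n ξ v
end

section
/- Let n ≥ 1, ξ : ℕ^n → ℂ and v ∈ ℂ^n, and define the quadratic expression Q(ξ,v) = Σ_{α∈ℕ^n} ( |Σ_{j : α_j ≥ 1} √(α_j) ξ_{α−c_j} v_j|² + Σ_{j=1}^n (|α|+n) |ξ_α|² |v_j|² ). Then Σ_{α∈ℕ^n} Σ_j (|α|+n)|ξ_α|²|v_j|² ≤ Q(ξ,v) ≤ 2 Σ_{α∈ℕ^n} Σ_j (|α|+n)|ξ_α|²|v_j|². (This is the two-sided estimate for the curvature quadratic form of the model Bergman bundle.) -/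
open Finset ENNReal
open scoped NNReal

/-!
The lower bound is trivial since `Q` is the diagonal sum plus a nonnegative term. For the upper
bound, Cauchy–Schwarz bounds `|Σ_j √(α_j) ξ_{α-c_j} v_j|²` by `(Σ_j α_j |ξ_{α-c_j}|²) |v|²`;
summing over `α` and substituting `β = α - c_j` turns `Σ_α Σ_{j : α_j ≥ 1} α_j |ξ_{α-c_j}|²`
into `Σ_β Σ_j (β_j + 1) |ξ_β|² = Σ_β (|β| + n) |ξ_β|²`, so the extra term is at most the
diagonal sum.
-/

theorem nnnorm_sum_sqrt_mul_mul_sq_le {ι : Type*} (s : Finset ι) (a : ι → ℝ≥0) (x v : ι → ℂ) :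
    (‖∑ j ∈ s, (Real.sqrt (a j) : ℂ) * x j * v j‖₊ : ℝ≥0∞) ^ 2 ≤
      (∑ j ∈ s, (a j : ℝ≥0∞) * (‖x j‖₊ : ℝ≥0∞) ^ 2) * ∑ j ∈ s, (‖v j‖₊ : ℝ≥0∞) ^ 2 := by
  have hterm : ∀ j ∈ s,
      ‖(Real.sqrt (a j) : ℂ) * x j * v j‖₊ ^ 2 = a j * ‖x j‖₊ ^ 2 * ‖v j‖₊ ^ 2 := by
    intro j _
    apply NNReal.coe_injective
    push_cast
    rw [norm_mul, norm_mul, Complex.norm_real, Real.norm_of_nonneg (Real.sqrt_nonneg _), mul_pow,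
      mul_pow, Real.sq_sqrt (a j).coe_nonneg]
  have h : ‖∑ j ∈ s, (Real.sqrt (a j) : ℂ) * x j * v j‖₊ ^ 2 ≤
      (∑ j ∈ s, a j * ‖x j‖₊ ^ 2) * ∑ j ∈ s, ‖v j‖₊ ^ 2 :=
    calc _ ≤ (∑ j ∈ s, ‖(Real.sqrt (a j) : ℂ) * x j * v j‖₊) ^ 2 := by
          gcongr
          exact nnnorm_sum_le _ _
      _ ≤ _ := sum_sq_le_sum_mul_sum_of_sq_le_mul _ (fun _ _ => zero_le) (fun _ _ => zero_le)
        fun j hj => (hterm j hj).le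
  exact_mod_cast h

theorem tsum_ite_one_le_eq_tsum_add_single {ι : Type*} [DecidableEq ι] (j : ι)
    (g : (ι → ℕ) → ℝ≥0∞) :
    ∑' α : ι → ℕ, (if 1 ≤ α j then g α else 0) = ∑' β : ι → ℕ, g (β + Pi.single j 1) := by
  have hinj : Function.Injective (· + Pi.single j 1 : (ι → ℕ) → ι → ℕ) := add_left_injective _
  refine (hinj.tsum_eq fun α hα => ?_).symm.trans (tsum_congr fun β => by simp)
  have hj : 1 ≤ α j := by_contra fun h => hα (if_neg h)
  refine ⟨α - Pi.single j 1, funext fun i => ?_⟩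
  by_cases hij : i = j
  · subst hij
    simp only [Pi.add_apply, Pi.sub_apply, Pi.single_eq_same]
    omega
  · simp [hij]

theorem tsum_sum_filter_mul_sub_single {ι : Type*} [Fintype ι] [DecidableEq ι]
    (f : (ι → ℕ) → ℝ≥0∞) :
    ∑' α : ι → ℕ, ∑ j ∈ univ.filter (fun j => 1 ≤ α j), (α j : ℝ≥0∞) * f (α - Pi.single j 1) =
      ∑' β : ι → ℕ, (((∑ i, β i) + Fintype.card ι : ℕ) : ℝ≥0∞) * f β := by
  calc _ = ∑ j, ∑' α : ι → ℕ, (if 1 ≤ α j then (α j : ℝ≥0∞) * f (α - Pi.single j 1) else 0) := by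
        rw [← Summable.tsum_finsetSum fun _ _ => ENNReal.summable]
        exact tsum_congr fun α => sum_filter _ _
    _ = ∑ j, ∑' β : ι → ℕ, ((β j : ℝ≥0∞) + 1) * f β := by
        refine sum_congr rfl fun j _ => ?_
        rw [tsum_ite_one_le_eq_tsum_add_single]
        simp
    _ = _ := by
        rw [← Summable.tsum_finsetSum fun _ _ => ENNReal.summable]
        refine tsum_congr fun β => ?_
        rw [← sum_mul, sum_add_distrib]
        push_cast
        simp

theorem tsum_nnnorm_sum_sqrt_mul_sub_single_sq_le {ι : Type*} [Fintype ι] [DecidableEq ι]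
    (ξ : (ι → ℕ) → ℂ) (v : ι → ℂ) :
    ∑' α : ι → ℕ, (‖∑ j ∈ univ.filter (fun j => 1 ≤ α j),
        (Real.sqrt (α j) : ℂ) * ξ (α - Pi.single j 1) * v j‖₊ : ℝ≥0∞) ^ 2 ≤
      ∑' α : ι → ℕ, ∑ j, (((∑ i, α i) + Fintype.card ι : ℕ) : ℝ≥0∞) * (‖ξ α‖₊ : ℝ≥0∞) ^ 2 *
        (‖v j‖₊ : ℝ≥0∞) ^ 2 :=
  calc _ ≤ ∑' α : ι → ℕ, (∑ j ∈ univ.filter (fun j => 1 ≤ α j),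
          (α j : ℝ≥0∞) * (‖ξ (α - Pi.single j 1)‖₊ : ℝ≥0∞) ^ 2) * ∑ j, (‖v j‖₊ : ℝ≥0∞) ^ 2 :=
        ENNReal.tsum_le_tsum fun α => by
          have h := nnnorm_sum_sqrt_mul_mul_sq_le (univ.filter (fun j => 1 ≤ α j))
            (fun j => α j) (fun j => ξ (α - Pi.single j 1)) v
          simp only [NNReal.coe_natCast, ENNReal.coe_natCast] at h
          exact h.trans (by gcongr; exact filter_subset _ _)
    _ = _ := by
        rw [ENNReal.tsum_mul_right, tsum_sum_filter_mul_sub_single fun β => (‖ξ β‖₊ : ℝ≥0∞) ^ 2,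
          ← ENNReal.tsum_mul_right]
        simp only [mul_sum]

theorem curvature_two_sided_bound_general (n : ℕ) (ξ : (Fin n → ℕ) → ℂ) (v : Fin n → ℂ) :
    (∑' α : Fin n → ℕ, ∑ j : Fin n,
        (((∑ i, α i) + n : ℕ) : ℝ≥0∞) * (‖ξ α‖₊ : ℝ≥0∞) ^ 2 * (‖v j‖₊ : ℝ≥0∞) ^ 2) ≤
      (∑' α : Fin n → ℕ,
        ((‖∑ j ∈ Finset.univ.filter (fun j : Fin n => 1 ≤ α j),
            (Real.sqrt (α j) : ℂ) * ξ (fun i => α i - if i = j then 1 else 0) * v j‖₊ :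
          ℝ≥0∞) ^ 2 +
          ∑ j : Fin n,
            (((∑ i, α i) + n : ℕ) : ℝ≥0∞) * (‖ξ α‖₊ : ℝ≥0∞) ^ 2 * (‖v j‖₊ : ℝ≥0∞) ^ 2)) ∧
    (∑' α : Fin n → ℕ,
        ((‖∑ j ∈ Finset.univ.filter (fun j : Fin n => 1 ≤ α j),
            (Real.sqrt (α j) : ℂ) * ξ (fun i => α i - if i = j then 1 else 0) * v j‖₊ :
          ℝ≥0∞) ^ 2 +
          ∑ j : Fin n,
            (((∑ i, α i) + n : ℕ) : ℝ≥0∞) * (‖ξ α‖₊ : ℝ≥0∞) ^ 2 * (‖v j‖₊ : ℝ≥0∞) ^ 2)) ≤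
      2 * ∑' α : Fin n → ℕ, ∑ j : Fin n,
        (((∑ i, α i) + n : ℕ) : ℝ≥0∞) * (‖ξ α‖₊ : ℝ≥0∞) ^ 2 * (‖v j‖₊ : ℝ≥0∞) ^ 2 := by
  have hshift : ∀ (α : Fin n → ℕ) (j : Fin n),
      (fun i => α i - if i = j then 1 else 0) = α - Pi.single j 1 :=
    fun α j => funext fun i => by simp [Pi.single_apply]
  have hT := tsum_nnnorm_sum_sqrt_mul_sub_single_sq_le ξ v
  rw [Fintype.card_fin] at hT
  simp only [hshift]
  refine ⟨ENNReal.tsum_le_tsum fun α => le_add_self, ?_⟩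
  rw [ENNReal.tsum_add, two_mul]
  gcongr

/-- **two-sided estimate for the model Bergman curvature quadratic form.**
Let `n ≥ 1`, `ξ : ℕⁿ → ℂ`, `v ∈ ℂⁿ`, and
`Q(ξ,v) = Σ_α ( |Σ_{j : α_j ≥ 1} √(α_j) ξ_{α-c_j} v_j|² + Σ_j (|α|+n)|ξ_α|²|v_j|² )`.
Then `Σ_α Σ_j (|α|+n)|ξ_α|²|v_j|² ≤ Q(ξ,v) ≤ 2 Σ_α Σ_j (|α|+n)|ξ_α|²|v_j|²`
(all sums possibly infinite). -/
theorem curvature_two_sided_bound (n : ℕ) (hn : 1 ≤ n) (ξ : (Fin n → ℕ) → ℂ) (v : Fin n → ℂ) :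
    (∑' α : Fin n → ℕ, ∑ j : Fin n,
        (((∑ i, α i) + n : ℕ) : ℝ≥0∞) * (‖ξ α‖₊ : ℝ≥0∞) ^ 2 * (‖v j‖₊ : ℝ≥0∞) ^ 2) ≤
      (∑' α : Fin n → ℕ,
        ((‖∑ j ∈ Finset.univ.filter (fun j : Fin n => 1 ≤ α j),
            (Real.sqrt (α j) : ℂ) * ξ (fun i => α i - if i = j then 1 else 0) * v j‖₊ :
          ℝ≥0∞) ^ 2 +
          ∑ j : Fin n,
            (((∑ i, α i) + n : ℕ) : ℝ≥0∞) * (‖ξ α‖₊ : ℝ≥0∞) ^ 2 * (‖v j‖₊ : ℝ≥0∞) ^ 2)) ∧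
    (∑' α : Fin n → ℕ,
        ((‖∑ j ∈ Finset.univ.filter (fun j : Fin n => 1 ≤ α j),
            (Real.sqrt (α j) : ℂ) * ξ (fun i => α i - if i = j then 1 else 0) * v j‖₊ :
          ℝ≥0∞) ^ 2 +
          ∑ j : Fin n,
            (((∑ i, α i) + n : ℕ) : ℝ≥0∞) * (‖ξ α‖₊ : ℝ≥0∞) ^ 2 * (‖v j‖₊ : ℝ≥0∞) ^ 2)) ≤
      2 * ∑' α : Fin n → ℕ, ∑ j : Fin n,
        (((∑ i, α i) + n : ℕ) : ℝ≥0∞) * (‖ξ α‖₊ : ℝ≥0∞) ^ 2 * (‖v j‖₊ : ℝ≥0∞) ^ 2 :=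
  curvature_two_sided_bound_general n ξ v
end

section
/- For every n ≥ 1, every multi-index α ∈ ℕ^n, and all indices ℓ, m ∈ {1,…,n}, the coefficient of the commutator [D*_ℓ, D_m] on the Bergman basis satisfies |√((α_ℓ + 1 − δ_{ℓm}) α_m) · (|α|+n) − √((α_ℓ+1)(α_m + δ_{ℓm})) · (|α|+n+1)| ≤ 2(|α|+n), where δ_{ℓm} is the Kronecker delta. -/
open Finset

/-- **bound `‖[D*_ℓ, D_m] e_α‖ ≤ 2(|α|+n)`.** For every `n ≥ 1`, every
multi-index `α ∈ ℕⁿ` and all `ℓ, m`, the commutator coefficient satisfies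
`|√((α_ℓ+1-δ_{ℓm}) α_m)(|α|+n) − √((α_ℓ+1)(α_m+δ_{ℓm}))(|α|+n+1)| ≤ 2(|α|+n)`. -/
theorem commutator_DD_bound (n : ℕ) (hn : 1 ≤ n) (α : Fin n → ℕ) (ℓ m : Fin n) :
    |Real.sqrt (((α ℓ : ℝ) + 1 - (if ℓ = m then 1 else 0)) * (α m : ℝ)) *
        (((∑ j, α j : ℕ) : ℝ) + n) -
      Real.sqrt (((α ℓ : ℝ) + 1) * ((α m : ℝ) + (if ℓ = m then 1 else 0))) *
        (((∑ j, α j : ℕ) : ℝ) + n + 1)| ≤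
      2 * (((∑ j, α j : ℕ) : ℝ) + n) := by
  set s : ℝ := (((∑ j, α j : ℕ) : ℝ)) with hs
  have hm_le : (α m : ℝ) ≤ s := by
    rw [hs]
    exact_mod_cast Finset.single_le_sum (f := α) (fun i _ => Nat.zero_le _)
      (Finset.mem_univ m)
  have hl_le : (α ℓ : ℝ) ≤ s := by
    rw [hs]
    exact_mod_cast Finset.single_le_sum (f := α) (fun i _ => Nat.zero_le _)
      (Finset.mem_univ ℓ)
  have hn1 : (1 : ℝ) ≤ (n : ℝ) := by exact_mod_cast hn
  have hs0 : 0 ≤ s := by rw [hs]; positivity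
  by_cases h : ℓ = m
  · subst h
    simp only [if_pos rfl, if_true]
    have h1 : ((α ℓ : ℝ) + 1 - 1) * (α ℓ : ℝ) = (α ℓ : ℝ) * (α ℓ : ℝ) := by ring
    have h2 : ((α ℓ : ℝ) + 1) * ((α ℓ : ℝ) + 1) = ((α ℓ : ℝ) + 1) * ((α ℓ : ℝ) + 1) := rfl
    rw [h1, Real.sqrt_mul_self (by positivity), Real.sqrt_mul_self (by positivity)]
    rw [abs_le]
    constructor <;> nlinarith
  · simp only [if_neg h]
    have hsum : (α ℓ : ℝ) + (α m : ℝ) ≤ s := by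
      rw [hs]
      have := Finset.add_sum_erase Finset.univ α (Finset.mem_univ ℓ)
      have hmem : m ∈ Finset.univ.erase ℓ := by
        simp [Finset.mem_erase, Ne.symm h]
      have h2 : α m ≤ ∑ j ∈ Finset.univ.erase ℓ, α j :=
        Finset.single_le_sum (fun i _ => Nat.zero_le _) hmem
      push_cast
      have : α ℓ + α m ≤ ∑ j, α j := by omega
      exact_mod_cast this
    have heq : ((α ℓ : ℝ) + 1 - 0) * (α m : ℝ) = ((α ℓ : ℝ) + 1) * ((α m : ℝ) + 0) := by
      ring
    rw [heq]
    have hq : Real.sqrt (((α ℓ : ℝ) + 1) * ((α m : ℝ) + 0)) ≤ 2 * (s + n) := by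
      rw [show (2 : ℝ) * (s + n) = Real.sqrt ((2 * (s + n)) ^ 2) by
        rw [Real.sqrt_sq (by positivity)]]
      apply Real.sqrt_le_sqrt
      nlinarith
    have habs : Real.sqrt (((α ℓ : ℝ) + 1) * ((α m : ℝ) + 0)) * (s + n) -
        Real.sqrt (((α ℓ : ℝ) + 1) * ((α m : ℝ) + 0)) * (s + n + 1) =
        -Real.sqrt (((α ℓ : ℝ) + 1) * ((α m : ℝ) + 0)) := by ring
    rw [habs, abs_neg, abs_of_nonneg (Real.sqrt_nonneg _)]
    exact hq
end

section
/- For every n ≥ 1, every multi-index α ∈ ℕ^n, and all indices ℓ, m ∈ {1,…,n}, one has |√((α_ℓ + δ_{ℓm})(α_m + 1)) / (|α|+n+1) − √(α_ℓ (α_m + 1 − δ_{ℓm})) / (|α|+n)| ≤ 1/(|α|+n), where δ_{ℓm} is the Kronecker delta. -/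
open Finset

/-- **bound `‖[W*_ℓ, W_m] e_α‖ ≤ ε²(|α|+n)⁻¹`, after factoring out `ε²`.**
For every `n ≥ 1`, every multi-index `α ∈ ℕⁿ` and all `ℓ, m`, one has
`|√((α_ℓ+δ_{ℓm})(α_m+1))/(|α|+n+1) − √(α_ℓ(α_m+1-δ_{ℓm}))/(|α|+n)| ≤ 1/(|α|+n)`. -/
theorem commutator_WW_bound (n : ℕ) (hn : 1 ≤ n) (α : Fin n → ℕ) (ℓ m : Fin n) :
    |Real.sqrt (((α ℓ : ℝ) + (if ℓ = m then 1 else 0)) * ((α m : ℝ) + 1)) /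
        (((∑ j, α j : ℕ) : ℝ) + n + 1) -
      Real.sqrt ((α ℓ : ℝ) * ((α m : ℝ) + 1 - (if ℓ = m then 1 else 0))) /
        (((∑ j, α j : ℕ) : ℝ) + n)| ≤
      1 / (((∑ j, α j : ℕ) : ℝ) + n) := by
  set S : ℝ := ((∑ j, α j : ℕ) : ℝ) + n with hSdef
  have ha : (α ℓ : ℝ) ≤ ((∑ j, α j : ℕ) : ℝ) := by
    exact_mod_cast Finset.single_le_sum (f := fun j => α j) (fun _ _ => Nat.zero_le _)
      (Finset.mem_univ ℓ)
  have hb : (α m : ℝ) ≤ ((∑ j, α j : ℕ) : ℝ) := by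
    exact_mod_cast Finset.single_le_sum (f := fun j => α j) (fun _ _ => Nat.zero_le _)
      (Finset.mem_univ m)
  have hn1 : (1 : ℝ) ≤ (n : ℝ) := by exact_mod_cast hn
  have hsum0 : (0 : ℝ) ≤ ((∑ j, α j : ℕ) : ℝ) := Nat.cast_nonneg _
  have hS1 : (1 : ℝ) ≤ S := by simp only [hSdef]; linarith
  have hS0 : (0 : ℝ) < S := by linarith
  have hS0' : (0 : ℝ) < S + 1 := by linarith
  have haS : (α ℓ : ℝ) + 1 ≤ S := by simp only [hSdef]; linarith
  have hbS : (α m : ℝ) + 1 ≤ S := by simp only [hSdef]; linarith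
  have ha0 : (0 : ℝ) ≤ (α ℓ : ℝ) := Nat.cast_nonneg _
  have hb0 : (0 : ℝ) ≤ (α m : ℝ) := Nat.cast_nonneg _
  by_cases h : ℓ = m
  · subst h
    simp only [if_pos rfl, if_true]
    have e1 : Real.sqrt (((α ℓ : ℝ) + 1) * ((α ℓ : ℝ) + 1)) = (α ℓ : ℝ) + 1 :=
      Real.sqrt_mul_self (by linarith)
    have e2 : Real.sqrt ((α ℓ : ℝ) * ((α ℓ : ℝ) + 1 - 1)) = (α ℓ : ℝ) := by
      have : (α ℓ : ℝ) + 1 - 1 = (α ℓ : ℝ) := by ring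
      rw [this, Real.sqrt_mul_self ha0]
    have key : ((α ℓ : ℝ) + 1) / (S + 1) - (α ℓ : ℝ) / S = (S - (α ℓ : ℝ)) / (S * (S + 1)) := by
      field_simp
      ring
    rw [e1, e2, key, abs_of_nonneg (div_nonneg (by linarith) (by positivity)),
      div_le_div_iff₀ (by positivity) hS0]
    nlinarith
  · simp only [if_neg h]
    rw [show ((α ℓ : ℝ) + 0) = (α ℓ : ℝ) by ring, show ((α m : ℝ) + 1 - 0) = (α m : ℝ) + 1 by ring]
    set r : ℝ := Real.sqrt ((α ℓ : ℝ) * ((α m : ℝ) + 1)) with hrdef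
    have hr0 : 0 ≤ r := Real.sqrt_nonneg _
    have hab : (α ℓ : ℝ) * ((α m : ℝ) + 1) ≤ (S + 1) ^ 2 := by nlinarith
    have hrS : r ≤ S + 1 := by
      rw [hrdef]
      calc Real.sqrt ((α ℓ : ℝ) * ((α m : ℝ) + 1)) ≤ Real.sqrt ((S + 1) ^ 2) :=
            Real.sqrt_le_sqrt hab
        _ = S + 1 := Real.sqrt_sq (by linarith)
    rw [abs_le]
    constructor
    · rw [neg_le, neg_sub, sub_le_iff_le_add, div_add_div _ _ (ne_of_gt hS0) (ne_of_gt hS0'),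
        div_le_div_iff₀ hS0 (by positivity)]
      nlinarith
    · have : r / (S + 1) - r / S ≤ 0 := by
        apply sub_nonpos.mpr
        apply div_le_div_of_nonneg_left hr0 hS0 ?_ |>.trans_eq rfl
        linarith
      calc r / (S + 1) - r / S ≤ 0 := this
        _ ≤ 1 / S := by positivity
end

section
/- For every n ≥ 1, all indices ℓ, m ∈ {1,…,n}, and every multi-index α ∈ ℕ^n with α_ℓ ≥ 1 and α_m ≥ 1, one has |√( (α_ℓ − δ_{ℓm}) α_m (|α|+n) / (|α|+n−1) ) − √( α_ℓ (α_m − δ_{ℓm}) (|α|+n−1) / (|α|+n) )| ≤ 1, where δ_{ℓm} is the Kronecker delta. -/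
open Finset

/-- **bound `‖[W*_ℓ, D_m] e_α‖ ≤ ε`, after factoring out `ε`.**
For every `n ≥ 1`, all indices `ℓ, m`, and every multi-index `α ∈ ℕⁿ` with `α_ℓ ≥ 1` and
`α_m ≥ 1`, one has
`|√((α_ℓ-δ_{ℓm}) α_m (|α|+n)/(|α|+n-1)) − √(α_ℓ (α_m-δ_{ℓm}) (|α|+n-1)/(|α|+n))| ≤ 1`. -/
theorem commutator_WD_bound (n : ℕ) (hn : 1 ≤ n) (ℓ m : Fin n) (α : Fin n → ℕ)
    (hℓ : 1 ≤ α ℓ) (hm : 1 ≤ α m) :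
    |Real.sqrt (((α ℓ : ℝ) - (if ℓ = m then 1 else 0)) * (α m : ℝ) *
          ((((∑ j, α j : ℕ) : ℝ) + n) / (((∑ j, α j : ℕ) : ℝ) + n - 1)) ) -
      Real.sqrt ((α ℓ : ℝ) * ((α m : ℝ) - (if ℓ = m then 1 else 0)) *
          ((((∑ j, α j : ℕ) : ℝ) + n - 1) / (((∑ j, α j : ℕ) : ℝ) + n)) )| ≤ 1 := by
  set S : ℝ := (((∑ j, α j : ℕ) : ℝ) + n) with hSdef
  have hsum : (α ℓ : ℝ) ≤ ((∑ j, α j : ℕ) : ℝ) := by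
    exact_mod_cast Finset.single_le_sum (f := α) (fun i _ => Nat.zero_le _) (mem_univ ℓ)
  have hsumm : (α m : ℝ) ≤ ((∑ j, α j : ℕ) : ℝ) := by
    exact_mod_cast Finset.single_le_sum (f := α) (fun i _ => Nat.zero_le _) (mem_univ m)
  have hn' : (1:ℝ) ≤ n := by exact_mod_cast hn
  have hℓ' : (1:ℝ) ≤ α ℓ := by exact_mod_cast hℓ
  have hm' : (1:ℝ) ≤ α m := by exact_mod_cast hm
  have hS0 : 0 < S := by simp only [hSdef]; linarith
  have hS1 : 0 < S - 1 := by simp only [hSdef]; linarith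
  have hℓS : (α ℓ : ℝ) ≤ S - 1 := by simp only [hSdef]; linarith
  have hmS : (α m : ℝ) ≤ S - 1 := by simp only [hSdef]; linarith
  set δ : ℝ := (if ℓ = m then (1:ℝ) else 0) with hδ
  have hδ0 : 0 ≤ δ := by rw [hδ]; split_ifs <;> norm_num
  have hδ1 : δ ≤ 1 := by rw [hδ]; split_ifs <;> norm_num
  set P : ℝ := ((α ℓ : ℝ) - δ) * (α m : ℝ) with hPdef
  have hP : P = (α ℓ : ℝ) * ((α m : ℝ) - δ) := by
    rw [hPdef, hδ]
    rcases eq_or_ne ℓ m with h | h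
    · subst h; ring
    · simp [h]
  have hP0 : 0 ≤ P := by
    rw [hPdef]
    have h1 : 0 ≤ (α ℓ : ℝ) - δ := by linarith
    have h2 : (0:ℝ) ≤ (α m : ℝ) := by positivity
    exact mul_nonneg h1 h2
  have hPle : P ≤ (S - 1) * S := by
    rw [hPdef, hδ]
    rcases eq_or_ne ℓ m with h | h
    · subst h
      rw [if_pos rfl]
      exact mul_le_mul (by linarith) (by linarith) (by positivity) (by linarith)
    · simp only [if_neg h, sub_zero]
      exact mul_le_mul (by linarith) (by linarith) (by positivity) (by linarith)
  rw [← hP]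
  set u : ℝ := Real.sqrt (S - 1) with hu
  set v : ℝ := Real.sqrt S with hv
  have hu0 : 0 < u := Real.sqrt_pos.2 hS1
  have hv0 : 0 < v := Real.sqrt_pos.2 hS0
  have hu2 : u * u = S - 1 := Real.mul_self_sqrt hS1.le
  have hv2 : v * v = S := Real.mul_self_sqrt hS0.le
  have e1 : Real.sqrt (P * (S / (S - 1))) = Real.sqrt P * (v / u) := by
    rw [Real.sqrt_mul hP0, Real.sqrt_div hS0.le]
  have e2 : Real.sqrt (P * ((S - 1) / S)) = Real.sqrt P * (u / v) := by
    rw [Real.sqrt_mul hP0, Real.sqrt_div hS1.le]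
  rw [e1, e2]
  have e3 : Real.sqrt P * (v / u) - Real.sqrt P * (u / v) = Real.sqrt P / (u * v) := by
    field_simp
    linear_combination Real.sqrt P * hv2 - Real.sqrt P * hu2
  rw [e3, abs_of_nonneg (by positivity)]
  rw [div_le_one (by positivity)]
  calc Real.sqrt P ≤ Real.sqrt ((S - 1) * S) := Real.sqrt_le_sqrt hPle
    _ = u * v := Real.sqrt_mul hS1.le S
end

section
/- Let n ≥ 1 and let a, L, M be natural numbers with L + M ≥ 1. Set R = ((max(a−L+M,0) + n)(a+n)) / (max(a−L,0) + n). Then: (i) if L + M ≤ (a+n)/2, one has R ≤ √6 · √((a+n)(max(a−L+M,0)+n)); and (ii) if L + M > (a+n)/2, one has R ≤ (6/n)(L+M)². -/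
set_option maxHeartbeats 800000


/-- **case-splitting estimate for the curvature error term.**
Let `n ≥ 1` and `a, L, M ∈ ℕ` with `L + M ≥ 1`, and set
`R = ((max(a-L+M,0)+n)(a+n))/(max(a-L,0)+n)` (subtractions taken in `ℤ`). Then:
(i) if `L + M ≤ (a+n)/2`, one has `R ≤ √6 √((a+n)(max(a-L+M,0)+n))`;
(ii) if `L + M > (a+n)/2`, one has `R ≤ (6/n)(L+M)²`. -/
theorem curvature_error_case_split (n : ℕ) (hn : 1 ≤ n) (a L M : ℕ) (hLM : 1 ≤ L + M) :
    ((L : ℝ) + (M : ℝ) ≤ ((a : ℝ) + (n : ℝ)) / 2 →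
      (((max ((a : ℤ) - (L : ℤ) + (M : ℤ)) 0 : ℤ) : ℝ) + (n : ℝ)) * ((a : ℝ) + (n : ℝ)) /
          (((max ((a : ℤ) - (L : ℤ)) 0 : ℤ) : ℝ) + (n : ℝ)) ≤
        Real.sqrt 6 *
          Real.sqrt (((a : ℝ) + (n : ℝ)) *
            (((max ((a : ℤ) - (L : ℤ) + (M : ℤ)) 0 : ℤ) : ℝ) + (n : ℝ)))) ∧
    (((a : ℝ) + (n : ℝ)) / 2 < (L : ℝ) + (M : ℝ) →
      (((max ((a : ℤ) - (L : ℤ) + (M : ℤ)) 0 : ℤ) : ℝ) + (n : ℝ)) * ((a : ℝ) + (n : ℝ)) /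
          (((max ((a : ℤ) - (L : ℤ)) 0 : ℤ) : ℝ) + (n : ℝ)) ≤
        6 / (n : ℝ) * ((L : ℝ) + (M : ℝ)) ^ 2) := by
  have hn' : (1:ℝ) ≤ (n:ℝ) := by exact_mod_cast hn
  have hSpos : (1:ℝ) ≤ (L:ℝ) + (M:ℝ) := by exact_mod_cast hLM
  set P : ℝ := ((max ((a : ℤ) - (L : ℤ) + (M : ℤ)) 0 : ℤ) : ℝ) + n with hPdef
  set D : ℝ := ((max ((a : ℤ) - (L : ℤ)) 0 : ℤ) : ℝ) + n with hDdef
  set A : ℝ := (a:ℝ) + n with hAdef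
  have hcast1 : ((max ((a : ℤ) - (L : ℤ) + (M : ℤ)) 0 : ℤ) : ℝ)
      = max ((a:ℝ) - L + M) 0 := by push_cast; ring_nf
  have hcast2 : ((max ((a : ℤ) - (L : ℤ)) 0 : ℤ) : ℝ) = max ((a:ℝ) - L) 0 := by
    push_cast; ring_nf
  have hDn : (n:ℝ) ≤ D := by
    rw [hDdef, hcast2]; nlinarith [le_max_right ((a:ℝ) - L) 0]
  have hDge : A - L ≤ D := by
    rw [hDdef, hcast2, hAdef]; nlinarith [le_max_left ((a:ℝ) - L) 0]
  have hPn : (n:ℝ) ≤ P := by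
    rw [hPdef, hcast1]; nlinarith [le_max_right ((a:ℝ) - L + M) 0]
  have hPle : P ≤ D + M := by
    rw [hPdef, hDdef, hcast1, hcast2]
    have : max ((a:ℝ) - L + M) 0 ≤ max ((a:ℝ) - L) 0 + M := by
      apply max_le
      · nlinarith [le_max_left ((a:ℝ) - L) 0]
      · positivity
    linarith
  have hPle2 : P ≤ A + M := by
    rw [hPdef, hcast1, hAdef]
    have : max ((a:ℝ) - L + M) 0 ≤ (a:ℝ) + M := by
      apply max_le
      · have : (0:ℝ) ≤ L := by positivity
        linarith
      · positivity
    linarith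
  have hDpos : 0 < D := by linarith
  have hPpos : 0 < P := by linarith
  have hApos : 0 < A := by rw [hAdef]; positivity
  have hM0 : (0:ℝ) ≤ M := by positivity
  have hL0 : (0:ℝ) ≤ L := by positivity
  constructor
  · intro h
    have hAD : A ≤ 2 * D := by linarith
    have hPD : P ≤ 2 * D := by linarith
    have hPA6 : P * A ≤ 6 * D ^ 2 := by nlinarith
    have hsq : (P * A / D) ^ 2 ≤ 6 * (A * P) := by
      rw [div_pow, div_le_iff₀ (by positivity)]
      nlinarith [mul_le_mul_of_nonneg_right hPA6 (by positivity : (0:ℝ) ≤ P * A)]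
    have hrw : Real.sqrt 6 * Real.sqrt (A * P) = Real.sqrt (6 * (A * P)) := by
      rw [← Real.sqrt_mul (by norm_num)]
    rw [hrw]
    exact (Real.le_sqrt (by positivity) (by positivity)).mpr hsq
  · intro h
    have h1 : P * A / D ≤ P * A / n := by
      apply div_le_div_of_nonneg_left (by positivity) (by linarith) hDn
    have h2 : P * A ≤ 6 * ((L:ℝ) + M) ^ 2 := by
      nlinarith [mul_le_mul_of_nonneg_right hPle2 hApos.le,
        mul_pos (by linarith : (0:ℝ) < 2 * ((L:ℝ) + M) - A) hApos,
        mul_nonneg (by linarith : (0:ℝ) ≤ (L:ℝ) + M - M) hApos.le,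
        mul_pos (by linarith : (0:ℝ) < 2 * ((L:ℝ) + M) - A)
          (by linarith : (0:ℝ) < (L:ℝ) + M)]
    have h3 : P * A / n ≤ 6 * ((L:ℝ) + M) ^ 2 / n := by gcongr
    have h4 : 6 * ((L:ℝ) + M) ^ 2 / n = 6 / n * ((L:ℝ) + M) ^ 2 := by ring
    linarith
end
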